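/- Let u : ℝ → ℝ be integrable with ∫_ℝ u(y) dy = 1, and for an integer l ≥ 2 define u_l(z) := ∑_{i=1}^{l} C(l,i) (−1)^{i+1} (1/i) u(z/i). Then ∫_ℝ u_l(z) dz = 1, and for every integer k with 1 ≤ k ≤ l−1, if ∫_ℝ |z|^k |u(z)| dz < ∞, then ∫_ℝ z^k u_l(z) dz = (∫_ℝ z^k u(z) dz) · ∑_{i=1}^{l} C(l,i)(−1)^{i+1} i^k; in particular, if u is symmetric (u(−z)=u(z)) and ∫|z|^{l−1}|u| < ∞, then ∫_ℝ z^k u_l(z) dz = 0 for all 1 ≤ k ≤ l−1. -/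
import Mathlib

open MeasureTheory Finset

lemma alt_sum_zero : ∀ l : ℕ, ∀ k : ℕ, k < l →
    ∑ i ∈ Finset.range (l + 1), (-1 : ℝ) ^ i * (l.choose i : ℝ) * (i : ℝ) ^ k = 0 := by
  intro l
  induction l using Nat.strong_induction_on with
  | _ l ih =>
    intro k hk
    match k with
    | 0 =>
      have hl : l ≠ 0 := by omega
      have h := Int.alternating_sum_range_choose (n := l)
      rw [if_neg hl] at h
      have h' : ((∑ i ∈ Finset.range (l + 1), (-1 : ℤ) ^ i * (l.choose i : ℤ) : ℤ) : ℝ) = 0 := by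
        rw [h]; norm_num
      push_cast at h'
      simpa using h'
    | k + 1 =>
      obtain ⟨m, rfl⟩ : ∃ m, l = m + 1 := ⟨l - 1, by omega⟩
      have hkm : k < m := by omega
      rw [Finset.sum_range_succ']
      have h0 : (-1 : ℝ) ^ 0 * ((m+1).choose 0 : ℝ) * ((0:ℕ) : ℝ) ^ (k+1) = 0 := by simp
      rw [h0, add_zero]
      have key : ∀ j ∈ Finset.range (m + 1),
          (-1 : ℝ) ^ (j+1) * ((m+1).choose (j+1) : ℝ) * ((j+1 : ℕ) : ℝ) ^ (k+1)
          = ∑ t ∈ Finset.range (k+1),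
              (-((m:ℝ)+1) * (k.choose t : ℝ)) * ((-1:ℝ)^j * (m.choose j : ℝ) * (j:ℝ)^t) := by
        intro j hj
        have hc : (((m+1).choose (j+1) : ℝ)) * ((j:ℝ)+1) = ((m:ℝ)+1) * (m.choose j : ℝ) := by
          have := Nat.add_one_mul_choose_eq m j
          have : ((Nat.succ m * m.choose j : ℕ) : ℝ) = (((m+1).choose (j+1) * (j+1) : ℕ) : ℝ) := by
            rw [this]
          push_cast at this
          linarith
        have hb : ((j:ℝ)+1)^k = ∑ t ∈ Finset.range (k+1), (k.choose t : ℝ) * (j:ℝ)^t := by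
          have := add_pow (j:ℝ) 1 k
          simp only [one_pow, mul_one] at this
          rw [this]
          exact Finset.sum_congr rfl fun t _ => by ring
        push_cast
        calc (-1 : ℝ) ^ (j+1) * ((m+1).choose (j+1) : ℝ) * ((j:ℝ)+1) ^ (k+1)
            = (-1 : ℝ) ^ (j+1) * (((m+1).choose (j+1) : ℝ) * ((j:ℝ)+1)) * ((j:ℝ)+1) ^ k := by
              ring
          _ = (-1 : ℝ) ^ (j+1) * (((m:ℝ)+1) * (m.choose j : ℝ)) * ((j:ℝ)+1) ^ k := by rw [hc]
          _ = ∑ t ∈ Finset.range (k+1),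
              (-((m:ℝ)+1) * (k.choose t : ℝ)) * ((-1:ℝ)^j * (m.choose j : ℝ) * (j:ℝ)^t) := by
              rw [hb, Finset.mul_sum]
              refine Finset.sum_congr rfl fun t _ => ?_
              rw [pow_succ]
              ring
      rw [Finset.sum_congr rfl key, Finset.sum_comm]
      refine Finset.sum_eq_zero fun t ht => ?_
      rw [← Finset.mul_sum, ih m (by omega) t (by simp at ht; omega), mul_zero]

lemma icc_sum_alt (l : ℕ) (hl : 1 ≤ l) :
    ∑ i ∈ Finset.Icc 1 l, (l.choose i : ℝ) * (-1 : ℝ) ^ (i + 1) = 1 := by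
  have h := Int.alternating_sum_range_choose (n := l)
  rw [if_neg (by omega)] at h
  have h' : ((∑ i ∈ Finset.range (l + 1), (-1 : ℤ) ^ i * (l.choose i : ℤ) : ℤ) : ℝ) = 0 := by
    rw [h]; norm_num
  push_cast at h'
  have hins : Finset.range (l + 1) = insert 0 (Finset.Icc 1 l) := by
    ext x; simp; omega
  rw [hins, Finset.sum_insert (by simp)] at h'
  simp only [pow_zero, Nat.choose_zero_right, Nat.cast_one, one_mul] at h'
  have : ∑ i ∈ Finset.Icc 1 l, (-1:ℝ)^i * (l.choose i : ℝ) = -1 := by linarith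
  calc ∑ i ∈ Finset.Icc 1 l, (l.choose i : ℝ) * (-1 : ℝ) ^ (i + 1)
      = -∑ i ∈ Finset.Icc 1 l, (-1:ℝ)^i * (l.choose i : ℝ) := by
        rw [← Finset.sum_neg_distrib]
        exact Finset.sum_congr rfl fun i _ => by rw [pow_succ]; ring
    _ = 1 := by rw [this]; norm_num

lemma icc_sum_alt_pow (l k : ℕ) (hk1 : 1 ≤ k) (hkl : k ≤ l - 1) (hl : 2 ≤ l) :
    ∑ i ∈ Finset.Icc 1 l, (l.choose i : ℝ) * (-1 : ℝ) ^ (i + 1) * (i : ℝ) ^ k = 0 := by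
  have h := alt_sum_zero l k (by omega)
  have hins : Finset.range (l + 1) = insert 0 (Finset.Icc 1 l) := by
    ext x; simp; omega
  rw [hins, Finset.sum_insert (by simp)] at h
  have h0 : (-1:ℝ)^0 * (l.choose 0 : ℝ) * ((0:ℕ):ℝ)^k = 0 := by
    simp [zero_pow (by omega : k ≠ 0)]
  rw [h0, zero_add] at h
  calc ∑ i ∈ Finset.Icc 1 l, (l.choose i : ℝ) * (-1 : ℝ) ^ (i + 1) * (i : ℝ) ^ k
      = -∑ i ∈ Finset.Icc 1 l, (-1:ℝ)^i * (l.choose i : ℝ) * (i:ℝ)^k := by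
        rw [← Finset.sum_neg_distrib]
        exact Finset.sum_congr rfl fun i _ => by rw [pow_succ]; ring
    _ = 0 := by rw [h]; norm_num

lemma integrable_pow_comp_div (u : ℝ → ℝ) (k : ℕ) (hu : Integrable (fun z => z ^ k * u z))
    (c : ℝ) (hc : 0 < c) : Integrable (fun z => z ^ k * u (z / c)) := by
  have heq : (fun z : ℝ => z ^ k * u (z / c))
      = fun z => c ^ k * ((fun y => y ^ k * u y) (z / c)) := by
    funext z
    simp only [div_pow]
    field_simp
  rw [heq]
  exact (hu.comp_div hc.ne').const_mul _

lemma integral_pow_comp_div (u : ℝ → ℝ) (k : ℕ) (hu : Integrable (fun z => z ^ k * u z))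
    (c : ℝ) (hc : 0 < c) :
    ∫ z, z ^ k * u (z / c) = c ^ (k + 1) * ∫ y, y ^ k * u y := by
  have heq : (fun z : ℝ => z ^ k * u (z / c))
      = fun z => c ^ k * ((fun y => y ^ k * u y) (z / c)) := by
    funext z
    simp only [div_pow]
    field_simp
  rw [heq, MeasureTheory.integral_const_mul _ _, MeasureTheory.Measure.integral_comp_div (fun y => y ^ k * u y) c,
    abs_of_pos hc, smul_eq_mul, pow_succ]
  ring

theorem stmt_6 (l : ℕ) (hl : 2 ≤ l) (u : ℝ → ℝ)
    (hu : Integrable u) (hu1 : ∫ y, u y = 1)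
    (u_l : ℝ → ℝ)
    (hul : ∀ z, u_l z =
      ∑ i ∈ Finset.Icc 1 l,
        (l.choose i : ℝ) * (-1 : ℝ) ^ (i + 1) * (1 / (i : ℝ)) * u (z / (i : ℝ))) :
    (∫ z, u_l z = 1) ∧
    (∀ k : ℕ, 1 ≤ k → k ≤ l - 1 →
      Integrable (fun z => z ^ k * u z) →
      ∫ z, z ^ k * u_l z =
        (∫ z, z ^ k * u z) *
          ∑ i ∈ Finset.Icc 1 l,
            (l.choose i : ℝ) * (-1 : ℝ) ^ (i + 1) * (i : ℝ) ^ k) ∧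
    ((∀ z, u (-z) = u z) →
      Integrable (fun z => |z| ^ (l - 1) * |u z|) →
      ∀ k : ℕ, 1 ≤ k → k ≤ l - 1 → ∫ z, z ^ k * u_l z = 0) := by
  have hpos : ∀ i ∈ Finset.Icc 1 l, (0 : ℝ) < (i : ℝ) := by
    intro i hi
    simp only [Finset.mem_Icc] at hi
    exact_mod_cast hi.1
  -- Part 1
  have h1 : ∫ z, u_l z = 1 := by
    have hint : ∀ i ∈ Finset.Icc 1 l, Integrable (fun z =>
        (l.choose i : ℝ) * (-1 : ℝ) ^ (i + 1) * (1 / (i : ℝ)) * u (z / (i : ℝ))) :=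
      fun i hi => (hu.comp_div (hpos i hi).ne').const_mul _
    simp only [hul]
    rw [MeasureTheory.integral_finset_sum _ hint]
    have hterm : ∀ i ∈ Finset.Icc 1 l,
        ∫ z, (l.choose i : ℝ) * (-1 : ℝ) ^ (i + 1) * (1 / (i : ℝ)) * u (z / (i : ℝ))
          = (l.choose i : ℝ) * (-1 : ℝ) ^ (i + 1) := by
      intro i hi
      rw [MeasureTheory.integral_const_mul _ _, MeasureTheory.Measure.integral_comp_div u (i : ℝ),
        abs_of_pos (hpos i hi), hu1, smul_eq_mul, mul_one,
        mul_assoc, one_div, inv_mul_cancel₀ (hpos i hi).ne', mul_one]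
    rw [Finset.sum_congr rfl hterm, icc_sum_alt l (by omega)]
  -- Part 2
  have h2 : ∀ k : ℕ, 1 ≤ k → k ≤ l - 1 →
      Integrable (fun z => z ^ k * u z) →
      ∫ z, z ^ k * u_l z =
        (∫ z, z ^ k * u z) *
          ∑ i ∈ Finset.Icc 1 l,
            (l.choose i : ℝ) * (-1 : ℝ) ^ (i + 1) * (i : ℝ) ^ k := by
    intro k hk1 hk2 hint
    have heq : ∀ z : ℝ, z ^ k * u_l z =
        ∑ i ∈ Finset.Icc 1 l,
          ((l.choose i : ℝ) * (-1 : ℝ) ^ (i + 1) * (1 / (i : ℝ))) * (z ^ k * u (z / (i : ℝ))) := by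
      intro z
      rw [hul, Finset.mul_sum]
      exact Finset.sum_congr rfl fun i _ => by ring
    simp only [heq]
    rw [MeasureTheory.integral_finset_sum _
      (fun i hi => (integrable_pow_comp_div u k hint _ (hpos i hi)).const_mul _)]
    have hterm : ∀ i ∈ Finset.Icc 1 l,
        ∫ z, ((l.choose i : ℝ) * (-1 : ℝ) ^ (i + 1) * (1 / (i : ℝ))) * (z ^ k * u (z / (i : ℝ)))
          = (∫ z, z ^ k * u z) * ((l.choose i : ℝ) * (-1 : ℝ) ^ (i + 1) * (i : ℝ) ^ k) := by
      intro i hi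
      rw [MeasureTheory.integral_const_mul _ _, integral_pow_comp_div u k hint _ (hpos i hi)]
      have hii : (1 / (i : ℝ)) * (i : ℝ) ^ (k + 1) = (i : ℝ) ^ k := by
        rw [pow_succ, one_div, inv_mul_eq_div, mul_div_assoc,
          div_self (hpos i hi).ne', mul_one]
      calc (l.choose i : ℝ) * (-1 : ℝ) ^ (i + 1) * (1 / (i : ℝ))
            * ((i : ℝ) ^ (k + 1) * ∫ z, z ^ k * u z)
          = (l.choose i : ℝ) * (-1 : ℝ) ^ (i + 1) * ((1 / (i : ℝ)) * (i : ℝ) ^ (k + 1))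
            * ∫ z, z ^ k * u z := by ring
        _ = (∫ z, z ^ k * u z) * ((l.choose i : ℝ) * (-1 : ℝ) ^ (i + 1) * (i : ℝ) ^ k) := by
            rw [hii]; ring
    rw [Finset.sum_congr rfl hterm, ← Finset.mul_sum]
  refine ⟨h1, h2, ?_⟩
  -- Part 3
  intro _ hmom k hk1 hk2
  have hik : Integrable (fun z => z ^ k * u z) := by
    refine (hu.abs.add hmom).mono'
      ((continuous_pow k).aestronglyMeasurable.mul hu.1) ?_
    filter_upwards with z
    have habs : ‖z ^ k * u z‖ = |z| ^ k * |u z| := by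
      rw [Real.norm_eq_abs, abs_mul, abs_pow]
    have hb : |z| ^ k ≤ 1 + |z| ^ (l - 1) := by
      rcases le_total |z| 1 with h | h
      · have h1' : |z| ^ k ≤ 1 := pow_le_one₀ (abs_nonneg z) h
        have h2' : (0:ℝ) ≤ |z| ^ (l - 1) := pow_nonneg (abs_nonneg z) _
        linarith
      · have h1' : |z| ^ k ≤ |z| ^ (l - 1) := pow_le_pow_right₀ h hk2
        linarith
    calc ‖z ^ k * u z‖ = |z| ^ k * |u z| := habs
      _ ≤ (1 + |z| ^ (l - 1)) * |u z| := by
          exact mul_le_mul_of_nonneg_right hb (abs_nonneg _)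
      _ = |u z| + |z| ^ (l - 1) * |u z| := by ring
  rw [h2 k hk1 hk2 hik, icc_sum_alt_pow l k hk1 hk2 hl, mul_zero]
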